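/- arXiv:1804.00130 — 2 statements merged into one kernel-verified Lean document; each statement's English description precedes it below -/
import Mathlib

section
/- Let y = Ax + e with ‖x‖₀ ≤ s₁, and let S ⊆ {1,…,N} with |S| = s₂. Define x̄ by x̄_S = A_S† y and x̄ = 0 off S. If δ_{s₁+s₂} < 1, then ‖x - x̄‖₂ ≤ (1/√(1 - δ_{s₁+s₂}²))‖x_{S^c}‖₂ + (√(1+δ_{s₂})/(1-δ_{s₁+s₂}))‖e‖₂. -/
open Finset

/-- ℓ2 norm of a vector. -/
noncomputable def l2 {n : ℕ} (v : Fin n → ℝ) : ℝ := Real.sqrt (∑ i, v i ^ 2)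

/-- ℓ1 norm of a vector. -/
noncomputable def l1 {n : ℕ} (v : Fin n → ℝ) : ℝ := ∑ i, |v i|

/-- number of nonzero entries (ℓ0 "norm"). -/
noncomputable def spars {n : ℕ} (v : Fin n → ℝ) : ℕ := Set.ncard {i | v i ≠ 0}

/-- restriction of a vector to an index set (zero off the set). -/
def restr {n : ℕ} (S : Finset (Fin n)) (v : Fin n → ℝ) : Fin n → ℝ :=
  fun i => if i ∈ S then v i else 0

/-! Write `z = x - x̄` and `u = z_S`. Since `x̄` vanishes off `S`, `z_{Sᶜ} = x_{Sᶜ}`, so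
`‖z‖² = ‖u‖² + ‖x_{Sᶜ}‖²`. The normal equations make `Au` orthogonal to the residual `Az + e`,
hence, by the RIP of order `s₁ + s₂` for the jointly supported `u, z` and of order `s₂` for `u`,
`‖u‖² = ⟨u, z⟩ ≤ ⟨Au, Az⟩ + δ₁‖u‖‖z‖ = -⟨Au, e⟩ + δ₁‖u‖‖z‖ ≤ (δ₁‖z‖ + √(1 + δ₂)‖e‖)‖u‖`.
Thus `‖z‖² ≤ (δ₁‖z‖ + √(1 + δ₂)‖e‖)² + ‖x_{Sᶜ}‖²`, a quadratic inequality in `‖z‖` whose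
solution is the claimed bound. -/

open Matrix

section Vectors

variable {n : ℕ}

lemma l2_nonneg (v : Fin n → ℝ) : 0 ≤ l2 v := Real.sqrt_nonneg _

lemma l2_sq (v : Fin n → ℝ) : l2 v ^ 2 = v ⬝ᵥ v := by
  rw [l2, Real.sq_sqrt (sum_nonneg fun i _ => sq_nonneg _)]
  simp only [dotProduct, sq]

lemma l2_eq_zero_iff {v : Fin n → ℝ} : l2 v = 0 ↔ v = 0 := by
  rw [← pow_eq_zero_iff two_ne_zero, l2_sq, dotProduct_self_eq_zero]

@[simp]
lemma l2_zero : l2 (0 : Fin n → ℝ) = 0 := l2_eq_zero_iff.mpr rfl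

lemma l2_smul_add_smul_sq (a b : ℝ) (u v : Fin n → ℝ) :
    l2 (a • u + b • v) ^ 2 = a ^ 2 * l2 u ^ 2 + 2 * a * b * (u ⬝ᵥ v) + b ^ 2 * l2 v ^ 2 := by
  simp only [l2_sq, add_dotProduct, dotProduct_add, smul_dotProduct, dotProduct_smul, smul_eq_mul,
    dotProduct_comm v u]
  ring

lemma dotProduct_le_l2_mul_l2 (u v : Fin n → ℝ) : u ⬝ᵥ v ≤ l2 u * l2 v :=
  Real.sum_mul_le_sqrt_mul_sqrt _ u v

lemma l2_neg (v : Fin n → ℝ) : l2 (-v) = l2 v := by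
  simp only [l2, Pi.neg_apply, neg_sq]

lemma spars_le_card {v : Fin n → ℝ} {T : Finset (Fin n)} (h : ∀ i ∉ T, v i = 0) :
    spars v ≤ T.card := by
  rw [spars, ← Set.ncard_coe_finset]
  exact Set.ncard_le_ncard (fun i hi => by by_contra hiT; exact hi (h i hiT)) T.finite_toSet

lemma card_filter_ne_zero (v : Fin n → ℝ) : (univ.filter (v · ≠ 0)).card = spars v := by
  rw [spars, ← Set.ncard_coe_finset, coe_filter]
  simp only [mem_univ, true_and]

lemma restr_apply_of_notMem {S : Finset (Fin n)} {v : Fin n → ℝ} {i : Fin n} (hi : i ∉ S) :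
    restr S v i = 0 := if_neg hi

lemma restr_dotProduct_self (S : Finset (Fin n)) (v : Fin n → ℝ) :
    restr S v ⬝ᵥ v = l2 (restr S v) ^ 2 := by
  rw [l2_sq]
  refine sum_congr rfl fun i _ => ?_
  by_cases hi : i ∈ S <;> simp [restr, hi]

lemma l2_restr_sq_add_l2_restr_compl_sq (S : Finset (Fin n)) (v : Fin n → ℝ) :
    l2 (restr S v) ^ 2 + l2 (restr Sᶜ v) ^ 2 = l2 v ^ 2 := by
  rw [l2_sq, l2_sq, l2_sq, dotProduct, dotProduct, dotProduct, ← sum_add_distrib]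
  refine sum_congr rfl fun i _ => ?_
  by_cases hi : i ∈ S <;> simp [restr, hi]

end Vectors

def IsRestrictedIsometry {M N : ℕ} (A : Matrix (Fin M) (Fin N) ℝ) (k : ℕ) (δ : ℝ) : Prop :=
  ∀ v : Fin N → ℝ, spars v ≤ k →
    (1 - δ) * l2 v ^ 2 ≤ l2 (A *ᵥ v) ^ 2 ∧ l2 (A *ᵥ v) ^ 2 ≤ (1 + δ) * l2 v ^ 2

namespace IsRestrictedIsometry

variable {M N k : ℕ} {A : Matrix (Fin M) (Fin N) ℝ} {δ : ℝ}

lemma nonneg (hA : IsRestrictedIsometry A k δ) {v : Fin N → ℝ} (hv : spars v ≤ k)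
    (hv0 : v ≠ 0) : 0 ≤ δ := by
  have hpos : 0 < l2 v ^ 2 := pow_pos ((l2_nonneg v).lt_of_ne' (l2_eq_zero_iff.not.mpr hv0)) 2
  obtain ⟨hlow, hup⟩ := hA v hv
  nlinarith

lemma l2_mulVec_le (hA : IsRestrictedIsometry A k δ) {v : Fin N → ℝ} (hv : spars v ≤ k) :
    l2 (A *ᵥ v) ≤ √(1 + δ) * l2 v := by
  rw [← Real.sqrt_sq (l2_nonneg (A *ᵥ v)), ← Real.sqrt_sq (l2_nonneg v), ← Real.sqrt_mul']
  · exact Real.sqrt_le_sqrt (hA v hv).2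
  · positivity

/-- Apply the RIP to `‖z‖u ± ‖u‖z` and polarize. -/
lemma dotProduct_sub_le (hA : IsRestrictedIsometry A k δ) {T : Finset (Fin N)} (hT : T.card ≤ k)
    {u z : Fin N → ℝ} (hu : ∀ i ∉ T, u i = 0) (hz : ∀ i ∉ T, z i = 0) :
    u ⬝ᵥ z - A *ᵥ u ⬝ᵥ A *ᵥ z ≤ δ * l2 u * l2 z := by
  rcases (l2_nonneg u).eq_or_lt' with hu0 | hu0
  · simp [l2_eq_zero_iff.mp hu0]
  rcases (l2_nonneg z).eq_or_lt' with hz0 | hz0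
  · simp [l2_eq_zero_iff.mp hz0]
  have hsupp : ∀ a b : ℝ, spars (a • u + b • z) ≤ k := fun a b =>
    (spars_le_card fun i hi => by simp [hu i hi, hz i hi]).trans hT
  have hplus := (hA _ (hsupp (l2 z) (l2 u))).1
  have hminus := (hA _ (hsupp (l2 z) (-l2 u))).2
  simp only [mulVec_add, mulVec_smul, l2_smul_add_smul_sq] at hplus hminus
  nlinarith [mul_pos hu0 hz0]

end IsRestrictedIsometry

lemma mulVec_dotProduct_eq_zero_of_normal_eq {M N : ℕ} {A : Matrix (Fin M) (Fin N) ℝ}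
    {S : Finset (Fin N)} {r : Fin M → ℝ} (hr : ∀ i ∈ S, ∑ j, A j i * r j = 0)
    {u : Fin N → ℝ} (hu : ∀ i ∉ S, u i = 0) : A *ᵥ u ⬝ᵥ r = 0 := by
  rw [dotProduct_comm, dotProduct_mulVec]
  refine sum_eq_zero fun i _ => ?_
  by_cases hi : i ∈ S
  · simp only [vecMul, dotProduct, mul_comm (r _), hr i hi, zero_mul]
  · rw [hu i hi, mul_zero]

/-- With `p = (1 - δ)c - d` the hypothesis reads `b² ≥ p((1 + δ)c + d)`, which for `p > 0`
gives `(1 - δ²)p² ≤ (1 - δ)²b²`. -/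
lemma le_div_sqrt_add_div_of_sq_le {δ b c d : ℝ} (hδ : |δ| < 1) (hb : 0 ≤ b) (hd : 0 ≤ d)
    (h : c ^ 2 ≤ (δ * c + d) ^ 2 + b ^ 2) :
    c ≤ 1 / √(1 - δ ^ 2) * b + d / (1 - δ) := by
  obtain ⟨hδneg, hδone⟩ := abs_lt.mp hδ
  have h1δ : 0 < 1 - δ := by linarith
  have hs : 0 < √(1 - δ ^ 2) := Real.sqrt_pos.mpr (by nlinarith)
  have hs2 : √(1 - δ ^ 2) ^ 2 = 1 - δ ^ 2 := Real.sq_sqrt (by nlinarith)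
  suffices √(1 - δ ^ 2) * ((1 - δ) * c - d) ≤ (1 - δ) * b by
    rw [div_mul_eq_mul_div, one_mul, div_add_div _ _ hs.ne' h1δ.ne', le_div_iff₀ (by positivity)]
    nlinarith
  set p := (1 - δ) * c - d
  rcases le_or_gt p 0 with hp | hp
  · nlinarith [mul_nonneg h1δ.le hb]
  have hb2 : p * ((1 + δ) * c + d) ≤ b ^ 2 := by nlinarith
  refine abs_le_of_sq_le_sq' ?_ (by positivity) |>.2
  rw [mul_pow, hs2]
  nlinarith [mul_le_mul_of_nonneg_left hb2 (sq_nonneg (1 - δ)),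
    mul_nonneg (mul_nonneg hd hp.le) h1δ.le]

lemma l2_restr_sq_le_of_normal_eq {M N k : ℕ} {A : Matrix (Fin M) (Fin N) ℝ} {δ₁ δ₂ : ℝ}
    {S T : Finset (Fin N)} (hA₁ : IsRestrictedIsometry A k δ₁)
    (hA₂ : IsRestrictedIsometry A S.card δ₂) (hT : T.card ≤ k) (hST : S ⊆ T)
    {z : Fin N → ℝ} {e : Fin M → ℝ} (hz : ∀ i ∉ T, z i = 0)
    (hres : ∀ i ∈ S, ∑ j, A j i * (A *ᵥ z + e) j = 0) :
    l2 (restr S z) ^ 2 ≤ l2 (restr S z) * (δ₁ * l2 z + √(1 + δ₂) * l2 e) := by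
  have hu : ∀ i ∉ S, restr S z i = 0 := fun i hi => restr_apply_of_notMem hi
  have horth := mulVec_dotProduct_eq_zero_of_normal_eq hres hu
  have hpol := hA₁.dotProduct_sub_le hT (fun i hi => hu i fun hiS => hi (hST hiS)) hz
  have hCS := dotProduct_le_l2_mul_l2 (A *ᵥ restr S z) (-e)
  have hAu := hA₂.l2_mulVec_le (spars_le_card hu)
  rw [restr_dotProduct_self] at hpol
  rw [dotProduct_add] at horth
  rw [dotProduct_neg, l2_neg] at hCS
  nlinarith [mul_le_mul_of_nonneg_right hAu (l2_nonneg e)]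

theorem stmt3 {M N : ℕ} (A : Matrix (Fin M) (Fin N) ℝ)
    (x : Fin N → ℝ) (e : Fin M → ℝ) (y : Fin M → ℝ)
    (hy : y = A.mulVec x + e)
    (s₁ s₂ : ℕ) (hx : spars x ≤ s₁)
    (S : Finset (Fin N)) (hS : S.card = s₂)
    (xb : Fin N → ℝ)
    -- x̄ is supported on S and x̄_S = A_S† y, characterized by the normal equations
    (hxbsupp : ∀ i ∉ S, xb i = 0)
    (hxbls : ∀ i ∈ S, ∑ j, A j i * (A.mulVec xb j - y j) = 0)
    (δ₁ δ₂ : ℝ) (hδ₁ : δ₁ < 1)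
    (hRIP₁ : ∀ v : Fin N → ℝ, spars v ≤ s₁ + s₂ →
      (1 - δ₁) * (l2 v) ^ 2 ≤ (l2 (A.mulVec v)) ^ 2 ∧
      (l2 (A.mulVec v)) ^ 2 ≤ (1 + δ₁) * (l2 v) ^ 2)
    (hRIP₂ : ∀ v : Fin N → ℝ, spars v ≤ s₂ →
      (1 - δ₂) * (l2 v) ^ 2 ≤ (l2 (A.mulVec v)) ^ 2 ∧
      (l2 (A.mulVec v)) ^ 2 ≤ (1 + δ₂) * (l2 v) ^ 2) :
    l2 (x - xb) ≤ (1 / Real.sqrt (1 - δ₁ ^ 2)) * l2 (restr Sᶜ x) + (Real.sqrt (1 + δ₂) / (1 - δ₁)) * l2 e := by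
  set z := x - xb
  rcases eq_or_ne z 0 with hz0 | hz0
  · rw [hz0, l2_zero]
    exact add_nonneg (mul_nonneg (by positivity) (l2_nonneg _))
      (mul_nonneg (div_nonneg (Real.sqrt_nonneg _) (by linarith)) (l2_nonneg _))
  set T := S ∪ univ.filter (x · ≠ 0)
  have hT : T.card ≤ s₁ + s₂ :=
    (card_union_le _ _).trans (by rw [hS, card_filter_ne_zero]; omega)
  have hzT : ∀ i ∉ T, z i = 0 := fun i hi => by
    simp only [T, mem_union, mem_filter, mem_univ, true_and, not_or, not_not] at hi
    simp [z, hi.2, hxbsupp i hi.1]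
  have hres : ∀ i ∈ S, ∑ j, A j i * (A *ᵥ z + e) j = 0 := fun i hi => by
    have : A *ᵥ z + e = -(A *ᵥ xb - y) := by rw [hy, mulVec_sub]; abel
    simp only [this, Pi.neg_apply, Pi.sub_apply, mul_neg, sum_neg_distrib, hxbls i hi, neg_zero]
  have hδ₁0 : 0 ≤ δ₁ := IsRestrictedIsometry.nonneg hRIP₁ ((spars_le_card hzT).trans hT) hz0
  have hu := l2_restr_sq_le_of_normal_eq hRIP₁ (hS ▸ hRIP₂) hT subset_union_left hzT hres
  have hpyth := l2_restr_sq_add_l2_restr_compl_sq S z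
  have hSc : restr Sᶜ z = restr Sᶜ x := funext fun i => by
    by_cases hi : i ∈ S <;> simp [restr, z, hi, hxbsupp]
  rw [hSc] at hpyth
  rw [div_mul_eq_mul_div (√(1 + δ₂))]
  refine le_div_sqrt_add_div_of_sq_le (abs_lt.mpr ⟨by linarith, hδ₁⟩) (l2_nonneg _)
    (mul_nonneg (Real.sqrt_nonneg _) (l2_nonneg e)) ?_
  nlinarith [l2_nonneg (restr S z), l2_nonneg z, l2_nonneg e]
end

section
/- Let x, x̂, w ∈ ℝ^N, T₀ a set of s indices, z = x̂ - x, λ ∈ (0,1], and suppose λ‖x̂‖₁ + (1-λ)‖x̂ - w‖₂ ≤ λ‖x‖₁ + (1-λ)‖x - w‖₂. Then ‖z_{T₀^c}‖₁ ≤ (1 - (1-λ)/(λ√s))‖z_{T₀}‖₁ + 2‖x_{T₀^c}‖₁ + (2(1-λ)/λ)‖x - w‖₂. -/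
open Finset

/-!
Split the ℓ₁ norm over `T₀` and its complement: the reverse triangle inequality on each part gives
`‖x̂‖₁ - ‖x‖₁ ≥ ‖z_{T₀ᶜ}‖₁ - ‖z_{T₀}‖₁ - 2‖x_{T₀ᶜ}‖₁`, while
`‖x̂ - w‖₂ ≥ ‖z‖₂ - ‖x - w‖₂ ≥ ‖z_{T₀}‖₁ / √s - ‖x - w‖₂` by Cauchy–Schwarz on `T₀`.
Inserting both bounds into the optimality of `x̂` and dividing by `λ` gives the cone inequality.
-/

section

variable {n : ℕ}

lemma sum_comp_restr (S : Finset (Fin n)) (v : Fin n → ℝ) {f : ℝ → ℝ} (hf : f 0 = 0) :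
    ∑ i, f (restr S v i) = ∑ i ∈ S, f (v i) := by
  simp [restr, apply_ite f, hf, Finset.sum_ite_mem]

lemma restr_add (S : Finset (Fin n)) (a b : Fin n → ℝ) :
    restr S (a + b) = restr S a + restr S b := by
  ext i
  by_cases h : i ∈ S <;> simp [restr, h]

lemma l1_eq_norm (v : Fin n → ℝ) : l1 v = ‖WithLp.toLp 1 v‖ := by
  simp [l1, PiLp.norm_eq_of_L1]

lemma l2_eq_norm (v : Fin n → ℝ) : l2 v = ‖WithLp.toLp 2 v‖ := by
  simp [l2, EuclideanSpace.norm_eq]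

lemma l1_sub_l1_le (a b : Fin n → ℝ) : l1 a - l1 b ≤ l1 (a + b) := by
  simpa only [l1_eq_norm, WithLp.toLp_add] using norm_sub_le_norm_add _ _

lemma l2_sub_l2_le (a b : Fin n → ℝ) : l2 a - l2 b ≤ l2 (a + b) := by
  simpa only [l2_eq_norm, WithLp.toLp_add] using norm_sub_le_norm_add _ _

lemma l1_restr_add_l1_restr_compl (S : Finset (Fin n)) (v : Fin n → ℝ) :
    l1 (restr S v) + l1 (restr Sᶜ v) = l1 v := by
  simp only [l1, sum_comp_restr _ _ abs_zero, sum_add_sum_compl]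

lemma l2_restr_le (S : Finset (Fin n)) (v : Fin n → ℝ) : l2 (restr S v) ≤ l2 v := by
  refine Real.sqrt_le_sqrt (sum_le_sum fun i _ => ?_)
  by_cases h : i ∈ S <;> simp [restr, h, sq_nonneg]

lemma l1_restr_le_sqrt_card_mul_l2_restr (S : Finset (Fin n)) (v : Fin n → ℝ) :
    l1 (restr S v) ≤ √S.card * l2 (restr S v) := by
  have hsq : ∀ i, |v i| ^ 2 = v i ^ 2 := fun i => sq_abs _
  rw [l1, l2, sum_comp_restr _ _ abs_zero, sum_comp_restr S v (f := (· ^ 2)) (zero_pow two_ne_zero),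
    ← Real.sqrt_mul (Nat.cast_nonneg _), Real.le_sqrt (by positivity) (by positivity)]
  simpa only [hsq] using sq_sum_le_card_mul_sum_sq (s := S) (f := fun i => |v i|)

lemma l1_restr_compl_sub_le (T : Finset (Fin n)) (x z : Fin n → ℝ) :
    l1 (restr Tᶜ z) - l1 (restr T z) - 2 * l1 (restr Tᶜ x) ≤ l1 (x + z) - l1 x := by
  have hT := l1_sub_l1_le (restr T x) (restr T z)
  have hTc := l1_sub_l1_le (restr Tᶜ z) (restr Tᶜ x)
  rw [← l1_restr_add_l1_restr_compl T x, ← l1_restr_add_l1_restr_compl T (x + z), restr_add,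
    restr_add, add_comm (restr Tᶜ x)]
  linarith

lemma l1_restr_div_sqrt_card_sub_le (T : Finset (Fin n)) (z u : Fin n → ℝ) :
    l1 (restr T z) / √T.card - l2 u ≤ l2 (z + u) := by
  have hCS : l1 (restr T z) / √T.card ≤ l2 (restr T z) :=
    div_le_of_le_mul₀ (Real.sqrt_nonneg _) (Real.sqrt_nonneg _)
      (by rw [mul_comm]; exact l1_restr_le_sqrt_card_mul_l2_restr T z)
  linarith [l2_restr_le T z, l2_sub_l2_le z u]

end

theorem stmt10_general {N : ℕ} (x xh w : Fin N → ℝ) (s : ℕ)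
    (T₀ : Finset (Fin N)) (hT₀ : T₀.card = s)
    (z : Fin N → ℝ) (hz : z = xh - x)
    (lam : ℝ) (hlam₁ : 0 < lam) (hlam₂ : lam ≤ 1)
    (hopt : lam * l1 xh + (1 - lam) * l2 (xh - w) ≤ lam * l1 x + (1 - lam) * l2 (x - w)) :
    l1 (restr T₀ᶜ z) ≤ (1 - (1 - lam) / (lam * Real.sqrt s)) * l1 (restr T₀ z)
      + 2 * l1 (restr T₀ᶜ x) + (2 * (1 - lam) / lam) * l2 (x - w) := by
  have hl1 := l1_restr_compl_sub_le T₀ x z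
  have hl2 := l1_restr_div_sqrt_card_sub_le T₀ z (x - w)
  rw [show x + z = xh by rw [hz, add_sub_cancel]] at hl1
  rw [show z + (x - w) = xh - w by rw [hz, sub_add_sub_cancel], hT₀] at hl2
  set A := l1 (restr T₀ z)
  set r := √(s : ℝ)
  have key : lam * l1 (restr T₀ᶜ z) ≤
      lam * A - (1 - lam) * (A / r) + 2 * lam * l1 (restr T₀ᶜ x) + 2 * (1 - lam) * l2 (x - w) := by
    linarith [mul_le_mul_of_nonneg_left hl1 hlam₁.le,
      mul_le_mul_of_nonneg_left hl2 (sub_nonneg.2 hlam₂)]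
  refine le_of_mul_le_mul_left (key.trans_eq ?_) hlam₁
  field_simp

/-- cone-type inequality for the ℓ2-penalty objective, any λ ∈ (0,1]. -/
theorem stmt10 {N : ℕ} (x xh w : Fin N → ℝ) (s : ℕ) (hs : 1 ≤ s)
    (T₀ : Finset (Fin N)) (hT₀ : T₀.card = s)
    (z : Fin N → ℝ) (hz : z = xh - x)
    (lam : ℝ) (hlam₁ : 0 < lam) (hlam₂ : lam ≤ 1)
    (hopt : lam * l1 xh + (1 - lam) * l2 (xh - w) ≤ lam * l1 x + (1 - lam) * l2 (x - w)) :
    l1 (restr T₀ᶜ z) ≤ (1 - (1 - lam) / (lam * Real.sqrt s)) * l1 (restr T₀ z)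
      + 2 * l1 (restr T₀ᶜ x) + (2 * (1 - lam) / lam) * l2 (x - w) :=
  stmt10_general x xh w s T₀ hT₀ z hz lam hlam₁ hlam₂ hopt
end
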